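/- Let G be a finite connected simple graph with positive edge weights, let B be the set of all bridges of G, and let G1, ..., Gt be the connected components of the graph obtained from G by deleting all edges in B. Then the maximum minimal cut value of G equals the maximum of the set consisting of the weights of the bridges in B together with, for each i, all cut values of minimal cuts of Gi. -/

import Mathlib

/-!
The components of `G` minus its bridges are the classes of 2-edge-reachability. Any two edges
crossing a minimal cut `(K, L)` have 2-edge-reachable endpoints on each side, since an edge inside
`K` can be bypassed through `L` and vice versa. Hence either a bridge crosses the cut, and then it
is the only crossing edge, or all crossing edges lie in one class `S`, and `(K ∩ S, L ∩ S)` is a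
minimal cut of `G[S]` with the same cut-set. Conversely, for a bridge `e`, and for the cut-set `F`
of a minimal cut of some `G[S]`, the two components of `G - e`, resp. `G - F`, form a minimal cut
of `G` with cut-set `{e}`, resp. `F`. So the two sets of cut values coincide.
-/

open Classical

/-- `IsMinimalCutOn G S K` says that `K` is one side of a minimal cut of the subgraph of `G`
induced on the vertex set `S`: `K ⊆ S`, both `K` and `S \ K` are nonempty, and the subgraphs
induced on `K` and on `S \ K` are connected. -/
def IsMinimalCutOn {V : Type*} (G : SimpleGraph V) (S K : Set V) : Prop :=
  K ⊆ S ∧ K.Nonempty ∧ (S \ K).Nonempty ∧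
    (G.induce K).Connected ∧ (G.induce (S \ K)).Connected

/-- The cut value of the cut `(K, S \ K)` of the subgraph of `G` induced on `S`:
the sum of the weights of all edges of `G` with one endpoint in `K` and the other in `S \ K`. -/
noncomputable def cutValueOn {V : Type*} [Fintype V] [DecidableEq V]
    (G : SimpleGraph V) (w : Sym2 V → ℝ) (S K : Set V) : ℝ :=
  ∑ e ∈ Finset.univ.filter
      (fun e : Sym2 V => e ∈ G.edgeSet ∧ ∃ x ∈ K, ∃ y ∈ S \ K, e = s(x, y)), w e

namespace SimpleGraph

variable {V : Type*} {G H : SimpleGraph V} {u v x y a b : V}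

theorem Preconnected.forall_mem_of_adj_closed (hG : G.Preconnected) {U : Set V} (ha : a ∈ U)
    (hU : ∀ ⦃x y⦄, G.Adj x y → x ∈ U → y ∈ U) (u : V) : u ∈ U := by
  by_contra hu
  obtain ⟨p⟩ := hG a u
  obtain ⟨d, -, hd, hd'⟩ := p.exists_boundary_dart U ha hu
  exact hd' (hU d.adj hd)

theorem Preconnected.exists_adj_of_mem_of_notMem (hG : G.Preconnected) {U : Set V} (ha : a ∈ U)
    (hb : b ∉ U) : ∃ x ∈ U, ∃ y ∉ U, G.Adj x y := by
  by_contra! h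
  exact hb <| hG.forall_mem_of_adj_closed ha
    (fun x y hxy hx => by_contra fun hy => h x hx y hy hxy) b

theorem Reachable.deleteEdges_of_induce {s : Set V} {F : Set (Sym2 V)}
    (hF : ∀ e ∈ F, ∃ z ∈ e, z ∉ s) {a b : s} (h : (G.induce s).Reachable a b) :
    (G.deleteEdges F).Reachable a b :=
  h.map
    { toFun := Subtype.val
      map_rel' := fun {a b} hab => deleteEdges_adj.mpr ⟨hab, fun he => by
        obtain ⟨z, hz, hzs⟩ := hF _ he
        rcases Sym2.mem_iff.mp hz with rfl | rfl
        exacts [hzs a.2, hzs b.2]⟩ }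

theorem Adj.deleteEdges_singleton {e : Sym2 V} (h : G.Adj x y) (hy : y ∉ e) :
    (G.deleteEdges {e}).Adj x y :=
  deleteEdges_adj.mpr ⟨h, fun he => hy (Set.mem_singleton_iff.mp he ▸ Sym2.mem_mk_right x y)⟩

theorem Adj.isEdgeReachable_two_of_not_isBridge (h : G.Adj x y) (hb : ¬G.IsBridge s(x, y)) :
    G.IsEdgeReachable 2 x y :=
  not_not.mp <| mt (isBridge_iff_not_isEdgeReachable_two h).mpr hb

theorem connected_induce_setOf_reachable (hH : H ≤ G) (x : V) :
    (G.induce {u | H.Reachable x u}).Connected := by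
  refine induce_connected_of_patches x (Reachable.refl x) fun {u} hu => ?_
  obtain ⟨p⟩ := hu
  refine ⟨{v | v ∈ (p.mapLe hH).support}, fun v hv => ?_, (p.mapLe hH).start_mem_support,
    (p.mapLe hH).end_mem_support, (p.mapLe hH).connected_induce_support.preconnected _ _⟩
  rw [Set.mem_ofPred_eq, Walk.support_mapLe_eq_support] at hv
  classical
  exact ⟨p.takeUntil v hv⟩

theorem reachable_deleteEdges_setOf_isBridge_iff :
    (G.deleteEdges {e | G.IsBridge e}).Reachable u v ↔ G.IsEdgeReachable 2 u v := by
  constructor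
  · rintro ⟨p⟩
    induction p with
    | nil => rfl
    | cons hadj _ ih =>
      obtain ⟨hadj, hnb⟩ := deleteEdges_adj.mp hadj
      exact (hadj.isEdgeReachable_two_of_not_isBridge hnb).trans ih
  · intro h
    obtain ⟨p, hp⟩ := (h.reachable two_ne_zero).exists_isPath
    refine ⟨p.toDeleteEdges _ fun e he hb => ?_⟩
    induction e using Sym2.ind with
    | _ x y =>
    exact (isBridge_iff_not_isEdgeReachable_two (p.adj_of_mem_edges he)).mp hb
      (hp.isTrail.isEdgeReachable_two_of_isEdgeReachable_two h
        (p.fst_mem_support_of_mem_edges he) (p.snd_mem_support_of_mem_edges he))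

theorem Preconnected.induce_inter_setOf_isEdgeReachable_two {s : Set V}
    (hs : (G.induce s).Preconnected) (v : V) :
    (G.induce (s ∩ {u | G.IsEdgeReachable 2 v u})).Preconnected := by
  rintro ⟨a, has, hva⟩ ⟨b, hbs, hvb⟩
  obtain ⟨q, hq⟩ := (hs ⟨a, has⟩ ⟨b, hbs⟩).exists_isPath
  set p := q.map (Embedding.induce s).toHom
  have hp : p.IsPath := hq.map (Embedding.induce (G := G) s).injective
  have hsupp : {u | u ∈ p.support} ⊆ s ∩ {u | G.IsEdgeReachable 2 v u} := by
    intro u hu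
    refine ⟨?_, hva.trans <| hp.isTrail.isEdgeReachable_two_of_isEdgeReachable_two
      (hva.symm.trans hvb) p.start_mem_support hu⟩
    rw [Set.mem_ofPred_eq, Walk.support_map, List.mem_map] at hu
    obtain ⟨u', -, rfl⟩ := hu
    exact u'.2
  exact (p.connected_induce_support.preconnected ⟨a, p.start_mem_support⟩
    ⟨b, p.end_mem_support⟩).map (induceHomOfLE _ hsupp).toHom

end SimpleGraph

open SimpleGraph

section MinimalCuts

variable {V : Type*} {G : SimpleGraph V} {S S' K K' : Set V} {v x y a b : V}

def cutSet (G : SimpleGraph V) (S K : Set V) : Set (Sym2 V) :=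
  {e | e ∈ G.edgeSet ∧ ∃ x ∈ K, ∃ y ∈ S \ K, e = s(x, y)}

theorem cutValueOn_congr [Fintype V] [DecidableEq V] (w : Sym2 V → ℝ)
    (h : cutSet G S K = cutSet G S' K') : cutValueOn G w S K = cutValueOn G w S' K' :=
  Finset.sum_congr (Finset.filter_congr fun e _ => Set.ext_iff.mp h e) fun _ _ => rfl

theorem cutValueOn_eq_of_cutSet_eq_singleton [Fintype V] [DecidableEq V] (w : Sym2 V → ℝ)
    {e : Sym2 V} (h : cutSet G S K = {e}) : cutValueOn G w S K = w e :=
  calc cutValueOn G w S K = ∑ e' ∈ Finset.univ.filter (· = e), w e' :=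
        Finset.sum_congr (Finset.filter_congr fun e' _ => Set.ext_iff.mp h e') fun _ _ => rfl
    _ = w e := by simp [Finset.filter_eq']

theorem cutSet_setOf_reachable_deleteEdges_subset (F : Set (Sym2 V)) (S : Set V) (x : V) :
    cutSet G S {u | (G.deleteEdges F).Reachable x u} ⊆ F := by
  rintro _ ⟨hab, a, ha, b, ⟨-, hb⟩, rfl⟩
  by_contra hF
  exact hb (ha.trans (deleteEdges_adj.mpr ⟨hab, hF⟩).reachable)

theorem isMinimalCutOn_setOf_reachable_deleteEdges (hG : G.Preconnected) {F : Set (Sym2 V)}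
    (hxy : ¬(G.deleteEdges F).Reachable x y)
    (hF : ∀ e ∈ F, ∀ z ∈ e,
      (G.deleteEdges F).Reachable x z ∨ (G.deleteEdges F).Reachable y z) :
    IsMinimalCutOn G Set.univ {u | (G.deleteEdges F).Reachable x u} := by
  set H := G.deleteEdges F
  have hcover : ∀ u, H.Reachable x u ∨ H.Reachable y u :=
    hG.forall_mem_of_adj_closed (U := {u | H.Reachable x u ∨ H.Reachable y u}) (Or.inl .rfl)
      fun a b hab ha => by
        by_cases he : s(a, b) ∈ F
        · exact hF _ he b (Sym2.mem_mk_right a b)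
        · have hHab := (deleteEdges_adj.mpr ⟨hab, he⟩ : H.Adj a b).reachable
          exact ha.imp (·.trans hHab) (·.trans hHab)
  have hcompl : Set.univ \ {u | H.Reachable x u} = {u | H.Reachable y u} := by
    ext u
    simp only [Set.mem_sdiff, Set.mem_univ, true_and, Set.mem_ofPred_eq]
    exact ⟨(hcover u).resolve_left, fun hyu hxu => hxy (hxu.trans hyu.symm)⟩
  refine ⟨Set.subset_univ _, ⟨x, .rfl⟩, ⟨y, hcompl ▸ .rfl⟩,
    connected_induce_setOf_reachable (deleteEdges_le F) x, ?_⟩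
  rw [hcompl]
  exact connected_induce_setOf_reachable (deleteEdges_le F) y

theorem exists_isMinimalCutOn_cutSet_eq_singleton (hG : G.Preconnected)
    (hb : G.IsBridge s(x, y)) :
    ∃ K, IsMinimalCutOn G Set.univ K ∧ cutSet G Set.univ K = {s(x, y)} := by
  refine ⟨_, isMinimalCutOn_setOf_reachable_deleteEdges hG hb ?_, Set.Subset.antisymm
    (cutSet_setOf_reachable_deleteEdges_subset _ _ _) ?_⟩
  · rintro _ rfl z hz
    rcases Sym2.mem_iff.mp hz with rfl | rfl
    exacts [Or.inl .rfl, Or.inr .rfl]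
  · rintro _ rfl
    exact ⟨hb.reachable_iff_adj.mp (hG x y), x, .rfl, y, ⟨trivial, hb⟩, rfl⟩

theorem exists_isMinimalCutOn_univ_cutSet_eq (hG : G.Preconnected)
    (h : IsMinimalCutOn G {u | G.IsEdgeReachable 2 v u} K) :
    ∃ K', IsMinimalCutOn G Set.univ K' ∧
      cutSet G Set.univ K' = cutSet G {u | G.IsEdgeReachable 2 v u} K := by
  set S := {u | G.IsEdgeReachable 2 v u}
  set F := cutSet G S K
  set H := G.deleteEdges F
  obtain ⟨hKS, ⟨x, hx⟩, ⟨y, hy⟩, hKc, hLc⟩ := h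
  have hK : ∀ a ∈ K, H.Reachable x a := fun a ha =>
    (hKc.preconnected ⟨x, hx⟩ ⟨a, ha⟩).deleteEdges_of_induce <| by
      rintro _ ⟨-, -, -, b, hb, rfl⟩
      exact ⟨b, Sym2.mem_mk_right _ _, hb.2⟩
  have hL : ∀ b ∈ S \ K, H.Reachable y b := fun b hb =>
    (hLc.preconnected ⟨y, hy⟩ ⟨b, hb⟩).deleteEdges_of_induce <| by
      rintro _ ⟨-, a, ha, -, -, rfl⟩
      exact ⟨a, Sym2.mem_mk_left _ _, fun h => h.2 ha⟩
  -- an `H`-path from `K` to `S \ K` is a trail between 2-edge-reachable vertices, so it stays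
  -- in `S`, where it has to use an edge of the cut
  have hxy : ¬H.Reachable x y := by
    intro hxy
    obtain ⟨p, hp⟩ := hxy.exists_isPath
    obtain ⟨d, hd, hdx, hdy⟩ := p.exists_boundary_dart K hx hy.2
    have hdS : d.snd ∈ S := (hKS hx).trans <|
      (hp.mapLe (deleteEdges_le F)).isTrail.isEdgeReachable_two_of_isEdgeReachable_two
        ((hKS hx).symm.trans hy.1) (p.mapLe _).start_mem_support
        (by rw [Walk.support_mapLe_eq_support]; exact p.dart_snd_mem_support_of_mem_darts hd)
    obtain ⟨hdG, hdF⟩ := deleteEdges_adj.mp d.adj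
    exact hdF ⟨hdG, d.fst, hdx, d.snd, ⟨hdS, hdy⟩, rfl⟩
  refine ⟨_, isMinimalCutOn_setOf_reachable_deleteEdges hG hxy ?_, Set.Subset.antisymm
    (cutSet_setOf_reachable_deleteEdges_subset _ _ _) ?_⟩
  · rintro _ ⟨-, a, ha, b, hb, rfl⟩ z hz
    rcases Sym2.mem_iff.mp hz with rfl | rfl
    exacts [Or.inl (hK _ ha), Or.inr (hL _ hb)]
  · rintro _ ⟨hab, a, ha, b, hb, rfl⟩
    exact ⟨hab, a, hK a ha, b, ⟨trivial, fun hxb => hxy (hxb.trans (hL b hb).symm)⟩, rfl⟩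

theorem IsMinimalCutOn.compl (h : IsMinimalCutOn G Set.univ K) :
    IsMinimalCutOn G Set.univ (Set.univ \ K) := by
  obtain ⟨-, hK, hL, hKc, hLc⟩ := h
  rw [IsMinimalCutOn, Set.sdiff_sdiff_cancel_left (Set.subset_univ K)]
  exact ⟨Set.subset_univ _, hL, hK, hLc, hKc⟩

theorem IsMinimalCutOn.exists_adj (hG : G.Preconnected) (h : IsMinimalCutOn G Set.univ K) :
    ∃ x ∈ K, ∃ y ∉ K, G.Adj x y :=
  have ⟨_, ha⟩ := h.2.1
  have ⟨_, _, hb⟩ := h.2.2.1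
  hG.exists_adj_of_mem_of_notMem ha hb

theorem IsMinimalCutOn.isEdgeReachable_two_of_adj (h : IsMinimalCutOn G Set.univ K)
    (hx : x ∈ K) (hy : y ∉ K) (hxy : G.Adj x y) (ha : a ∈ K) (hb : b ∉ K)
    (hab : G.Adj a b) : G.IsEdgeReachable 2 x a := by
  obtain ⟨-, -, -, hKc, hLc⟩ := h
  refine isEdgeReachable_two.mpr fun e => ?_
  by_cases he : ∀ z ∈ e, z ∈ K
  · -- `e` lies inside `K`: go around it through the other side of the cut
    have hyb := (hLc.preconnected ⟨y, trivial, hy⟩ ⟨b, trivial, hb⟩).deleteEdges_of_induce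
      (F := {e}) <| by
        simp only [Set.mem_singleton_iff, forall_eq]
        exact ⟨_, Sym2.out_fst_mem e, fun h => h.2 (he _ (Sym2.out_fst_mem e))⟩
    exact (hxy.deleteEdges_singleton fun h => hy (he y h)).reachable.trans <|
      hyb.trans (hab.deleteEdges_singleton fun h => hb (he b h)).reachable.symm
  · push Not at he
    obtain ⟨z, hz, hzK⟩ := he
    exact (hKc.preconnected ⟨x, hx⟩ ⟨a, ha⟩).deleteEdges_of_induce <| by
      simpa only [Set.mem_singleton_iff, forall_eq] using ⟨z, hz, hzK⟩

theorem IsMinimalCutOn.cutSet_eq_singleton_of_isBridge (h : IsMinimalCutOn G Set.univ K)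
    (hx : x ∈ K) (hy : y ∉ K) (hxy : G.Adj x y) (hb : G.IsBridge s(x, y)) :
    cutSet G Set.univ K = {s(x, y)} := by
  refine Set.eq_singleton_iff_unique_mem.mpr ⟨⟨hxy, x, hx, y, ⟨trivial, hy⟩, rfl⟩, ?_⟩
  rintro _ ⟨hab, a, ha, b, ⟨-, hb'⟩, rfl⟩
  by_contra hne
  have hxa :=
    isEdgeReachable_two.mp (h.isEdgeReachable_two_of_adj hx hy hxy ha hb' hab) s(x, y)
  have hyb := isEdgeReachable_two.mp (h.compl.isEdgeReachable_two_of_adj ⟨trivial, hy⟩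
    (fun h => h.2 hx) hxy.symm ⟨trivial, hb'⟩ (fun h => h.2 ha) hab.symm) s(x, y)
  exact hb (hxa.trans ((deleteEdges_adj.mpr ⟨hab, hne⟩).reachable.trans hyb.symm))

theorem IsMinimalCutOn.inter_setOf_isEdgeReachable_two (h : IsMinimalCutOn G Set.univ K)
    (hnb : ∀ a ∈ K, ∀ b ∉ K, G.Adj a b → ¬G.IsBridge s(a, b))
    (hx : x ∈ K) (hy : y ∉ K) (hxy : G.Adj x y) :
    IsMinimalCutOn G {u | G.IsEdgeReachable 2 x u} (K ∩ {u | G.IsEdgeReachable 2 x u}) ∧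
      cutSet G {u | G.IsEdgeReachable 2 x u} (K ∩ {u | G.IsEdgeReachable 2 x u}) =
        cutSet G Set.univ K := by
  set S := {u | G.IsEdgeReachable 2 x u}
  have hcross : ∀ a ∈ K, ∀ b ∉ K, G.Adj a b → a ∈ S ∧ b ∈ S := fun a ha b hb hab =>
    have hxa := h.isEdgeReachable_two_of_adj hx hy hxy ha hb hab
    ⟨hxa, hxa.trans (hab.isEdgeReachable_two_of_not_isBridge (hnb a ha b hb hab))⟩
  have hdiff : S \ (K ∩ S) = (Set.univ \ K) ∩ S := by
    ext
    simp only [Set.mem_sdiff, Set.mem_inter_iff, Set.mem_univ, true_and]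
    tauto
  have hyS : y ∈ (Set.univ \ K) ∩ S := ⟨⟨trivial, hy⟩, (hcross x hx y hy hxy).2⟩
  obtain ⟨-, -, -, hKc, hLc⟩ := h
  refine ⟨⟨Set.inter_subset_right, ⟨x, hx, .rfl⟩, hdiff ▸ ⟨y, hyS⟩, ?_, ?_⟩, ?_⟩
  · exact (connected_iff _).mpr
      ⟨hKc.preconnected.induce_inter_setOf_isEdgeReachable_two x, ⟨⟨x, hx, .rfl⟩⟩⟩
  · rw [hdiff]
    exact (connected_iff _).mpr
      ⟨hLc.preconnected.induce_inter_setOf_isEdgeReachable_two x, ⟨⟨y, hyS⟩⟩⟩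
  · ext e
    constructor
    · rintro ⟨he, a, ⟨ha, -⟩, b, hb, rfl⟩
      exact ⟨he, a, ha, b, ⟨trivial, fun h => hb.2 ⟨h, hb.1⟩⟩, rfl⟩
    · rintro ⟨he, a, ha, b, ⟨-, hb⟩, rfl⟩
      obtain ⟨haS, hbS⟩ := hcross a ha b hb he
      exact ⟨he, a, ⟨ha, haS⟩, b, ⟨hbS, fun h => hb h.1⟩, rfl⟩

end MinimalCuts

theorem maxMinimalCut_allBridges_decomposition_general {V : Type*} [Fintype V] [DecidableEq V]
    (G : SimpleGraph V) (hG : G.Connected)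
    (w : Sym2 V → ℝ) :
    sSup {r : ℝ | ∃ K : Set V,
        IsMinimalCutOn G Set.univ K ∧ r = cutValueOn G w Set.univ K} =
      sSup ({r : ℝ | ∃ e : Sym2 V, G.IsBridge e ∧ r = w e} ∪
        {r : ℝ | ∃ v : V, ∃ K : Set V,
            IsMinimalCutOn G {u | (G.deleteEdges {e | G.IsBridge e}).Reachable v u} K ∧
            r = cutValueOn G w {u | (G.deleteEdges {e | G.IsBridge e}).Reachable v u} K}) := by
  simp_rw [reachable_deleteEdges_setOf_isBridge_iff]
  congr 1
  ext r
  constructor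
  · rintro ⟨K, hK, rfl⟩
    obtain ⟨x, hx, y, hy, hxy⟩ := hK.exists_adj hG.preconnected
    by_cases hbr : ∃ a ∈ K, ∃ b ∉ K, G.Adj a b ∧ G.IsBridge s(a, b)
    · obtain ⟨a, ha, b, hb, hab, hbr⟩ := hbr
      exact Or.inl ⟨s(a, b), hbr, cutValueOn_eq_of_cutSet_eq_singleton w
        (hK.cutSet_eq_singleton_of_isBridge ha hb hab hbr)⟩
    · push Not at hbr
      obtain ⟨hK', hcut⟩ := hK.inter_setOf_isEdgeReachable_two hbr hx hy hxy
      exact Or.inr ⟨x, _, hK', cutValueOn_congr w hcut.symm⟩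
  · rintro (⟨e, he, rfl⟩ | ⟨v, K, hK, rfl⟩)
    · induction e using Sym2.ind with
      | _ x y =>
      obtain ⟨K, hK, hcut⟩ := exists_isMinimalCutOn_cutSet_eq_singleton hG.preconnected he
      exact ⟨K, hK, (cutValueOn_eq_of_cutSet_eq_singleton w hcut).symm⟩
    · obtain ⟨K', hK', hcut⟩ := exists_isMinimalCutOn_univ_cutSet_eq hG.preconnected hK
      exact ⟨K', hK', cutValueOn_congr w hcut.symm⟩

/-- Let `G` be a finite connected simple graph with positive edge weights,
let `B` be the set of all bridges of `G`, and let `G1, ..., Gt` be the connected components of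
the graph obtained from `G` by deleting all edges of `B` (for each vertex `v`, the component of
`v` is `{u | (G.deleteEdges B).Reachable v u}`). Then the maximum minimal cut value of `G`
equals the maximum of the set consisting of the weights of the bridges together with, for each
component, all cut values of minimal cuts of that component. -/
theorem maxMinimalCut_allBridges_decomposition {V : Type*} [Fintype V] [DecidableEq V]
    (G : SimpleGraph V) (hG : G.Connected)
    (w : Sym2 V → ℝ) (hw : ∀ e ∈ G.edgeSet, 0 < w e) :
    sSup {r : ℝ | ∃ K : Set V,
        IsMinimalCutOn G Set.univ K ∧ r = cutValueOn G w Set.univ K} =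
      sSup ({r : ℝ | ∃ e : Sym2 V, G.IsBridge e ∧ r = w e} ∪
        {r : ℝ | ∃ v : V, ∃ K : Set V,
            IsMinimalCutOn G {u | (G.deleteEdges {e | G.IsBridge e}).Reachable v u} K ∧
            r = cutValueOn G w {u | (G.deleteEdges {e | G.IsBridge e}).Reachable v u} K}) :=
  maxMinimalCut_allBridges_decomposition_general G hG w
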